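/- arXiv:math/0601503 — 3 statements merged into one kernel-verified Lean document; each statement's English description precedes it below -/
import Mathlib

section
/- For every real number z ≥ 1 and every α with 0 ≤ α ≤ 1, one has α · arcosh(z) ≤ arcosh(z^α). -/
noncomputable def arcosh (z : ℝ) : ℝ := Real.log (z + Real.sqrt (z ^ 2 - 1))

lemma arcosh_cosh {t : ℝ} (ht : 0 ≤ t) : arcosh (Real.cosh t) = t := by
  have h1 : Real.cosh t ^ 2 - 1 = Real.sinh t ^ 2 := by
    have := Real.cosh_sq_sub_sinh_sq t; linarith
  have h2 : Real.sqrt (Real.cosh t ^ 2 - 1) = Real.sinh t := by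
    rw [h1, Real.sqrt_sq (Real.sinh_nonneg_iff.2 ht)]
  unfold arcosh
  rw [h2, Real.cosh_add_sinh, Real.log_exp]

lemma arcosh_mono {a b : ℝ} (ha : 1 ≤ a) (hab : a ≤ b) : arcosh a ≤ arcosh b := by
  have h1 : (0:ℝ) < a + Real.sqrt (a ^ 2 - 1) := by positivity
  apply Real.log_le_log h1
  have : Real.sqrt (a ^ 2 - 1) ≤ Real.sqrt (b ^ 2 - 1) := by
    apply Real.sqrt_le_sqrt; nlinarith
  linarith

lemma cosh_arcosh {z : ℝ} (hz : 1 ≤ z) : Real.cosh (arcosh z) = z := by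
  set s := Real.sqrt (z ^ 2 - 1) with hs
  have hs2 : s ^ 2 = z ^ 2 - 1 := Real.sq_sqrt (by nlinarith)
  have hzs : (0:ℝ) < z + s := by positivity
  have hinv : (z + s)⁻¹ = z - s := by
    field_simp; nlinarith
  unfold arcosh
  rw [Real.cosh_eq, Real.exp_log hzs, ← Real.log_inv, Real.exp_log (by rw [hinv] at *; nlinarith [Real.sq_sqrt (show (0:ℝ) ≤ z^2-1 by nlinarith), Real.sqrt_nonneg (z^2-1)] ), hinv]
  ring

lemma cosh_smul_le {t α : ℝ} (ht : 0 ≤ t) (hα0 : 0 ≤ α) (hα1 : α ≤ 1) :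
    Real.cosh (α * t) ≤ Real.cosh t ^ α := by
  have hc := Real.concaveOn_rpow hα0 hα1
  have h := hc.2 (Set.mem_Ici.2 (Real.exp_nonneg t)) (Set.mem_Ici.2 (Real.exp_nonneg (-t)))
    (by norm_num : (0:ℝ) ≤ (1:ℝ)/2) (by norm_num : (0:ℝ) ≤ (1:ℝ)/2) (by norm_num)
  have key : (Real.exp t) ^ α / 2 + (Real.exp (-t)) ^ α / 2
      ≤ (Real.exp t / 2 + Real.exp (-t) / 2) ^ α := by
    have := h
    simp only [smul_eq_mul] at this
    calc (Real.exp t) ^ α / 2 + (Real.exp (-t)) ^ α / 2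
        = (1/2) * (Real.exp t) ^ α + (1/2) * (Real.exp (-t)) ^ α := by ring
      _ ≤ ((1/2) * Real.exp t + (1/2) * Real.exp (-t)) ^ α := this
      _ = (Real.exp t / 2 + Real.exp (-t) / 2) ^ α := by ring_nf
  have he : Real.exp (α * t) = (Real.exp t) ^ α := by
    rw [mul_comm, Real.exp_mul]
  have he' : Real.exp (-(α * t)) = (Real.exp (-t)) ^ α := by
    rw [show -(α * t) = -t * α by ring, Real.exp_mul]
  rw [Real.cosh_eq, Real.cosh_eq, he, he']
  calc ((Real.exp t) ^ α + (Real.exp (-t)) ^ α) / 2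
      = (Real.exp t) ^ α / 2 + (Real.exp (-t)) ^ α / 2 := by ring
    _ ≤ (Real.exp t / 2 + Real.exp (-t) / 2) ^ α := key
    _ = ((Real.exp t + Real.exp (-t)) / 2) ^ α := by ring_nf

theorem stmt0 (z α : ℝ) (hz : 1 ≤ z) (hα0 : 0 ≤ α) (hα1 : α ≤ 1) :
    α * arcosh z ≤ arcosh (z ^ α) := by
  set t := arcosh z with ht
  have ht0 : 0 ≤ t := by
    unfold t; unfold arcosh
    apply Real.log_nonneg
    have := Real.sqrt_nonneg (z ^ 2 - 1); linarith
  have hcz : Real.cosh t = z := cosh_arcosh hz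
  have hkey : Real.cosh (α * t) ≤ z ^ α := by
    rw [← hcz]; exact cosh_smul_le ht0 hα0 hα1
  have h1 : 1 ≤ Real.cosh (α * t) := Real.one_le_cosh _
  calc α * t = arcosh (Real.cosh (α * t)) := (arcosh_cosh (by positivity)).symm
    _ ≤ arcosh (z ^ α) := arcosh_mono h1 hkey
end

section
/- In the hyperbolic plane of constant curvature −λ² (λ > 0), let p, q, x be points with s = d(p, x), t = d(q, x), s ≤ t, and let θ ∈ [0, π] be the angle at x between the geodesics from x to p and from x to q, so that cosh(λ d(p,q)) = cosh(λs)·cosh(λt) − sinh(λs)·sinh(λt)·cos θ. Then there exists a constant c₃ > 0 depending only on λ such that d(p,q) ≥ s + t + (2/λ)·log θ − c₃, provided θ > 0. -/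
private lemma sinh_ge_exp_div_four (x : ℝ) (hx : 1 ≤ x) :
    Real.exp x / 4 ≤ Real.sinh x := by
  rw [Real.sinh_eq]
  have h1 : Real.exp (-x) * Real.exp x = 1 := by
    rw [← Real.exp_add]; simp
  have h2 : (2:ℝ) < Real.exp x :=
    lt_of_lt_of_le (by nlinarith [Real.exp_one_gt_d9]) (Real.exp_le_exp.mpr hx)
  nlinarith [Real.exp_pos (-x)]

set_option maxHeartbeats 1600000 in
theorem stmt15 (lam : ℝ) (hlam : 0 < lam) :
    ∃ c₃ > (0 : ℝ), ∀ s t θ d : ℝ, 0 ≤ s → s ≤ t → 0 < θ → θ ≤ Real.pi → 0 ≤ d →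
      Real.cosh (lam * d) =
        Real.cosh (lam * s) * Real.cosh (lam * t)
          - Real.sinh (lam * s) * Real.sinh (lam * t) * Real.cos θ →
      s + t + (2 / lam) * Real.log θ - c₃ ≤ d := by
  refine ⟨5 / lam, by positivity, ?_⟩
  intro s t θ d hs hst hθ hθpi hd hcosh
  have ht : 0 ≤ t := hs.trans hst
  -- rewrite the law of cosines using cosh of difference
  have hsub : Real.cosh (lam * t - lam * s)
      = Real.cosh (lam * t) * Real.cosh (lam * s)
        - Real.sinh (lam * t) * Real.sinh (lam * s) := Real.cosh_sub _ _
  have hid : Real.cosh (lam * d) = Real.cosh (lam * t - lam * s)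
      + Real.sinh (lam * s) * Real.sinh (lam * t) * (1 - Real.cos θ) := by
    rw [hsub] at *; linarith [hcosh]
  have hsinh_s : 0 ≤ Real.sinh (lam * s) := Real.sinh_nonneg_iff.mpr (by positivity)
  have hsinh_t : 0 ≤ Real.sinh (lam * t) := Real.sinh_nonneg_iff.mpr (by positivity)
  have hcos1 : Real.cos θ ≤ 1 := Real.cos_le_one θ
  -- reduce to a multiplied-out inequality
  suffices key : lam * (s + t) + 2 * Real.log θ - 5 ≤ lam * d by
    calc s + t + 2 / lam * Real.log θ - 5 / lam
        = (lam * (s + t) + 2 * Real.log θ - 5) / lam := by field_simp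
      _ ≤ (lam * d) / lam := by gcongr
      _ = d := by field_simp
  have hlogπ : Real.log θ ≤ 1.4 := by
    have h4 : θ ≤ 4 := hθpi.trans (by linarith [Real.pi_le_four])
    calc Real.log θ ≤ Real.log 4 := Real.log_le_log hθ h4
      _ = 2 * Real.log 2 := by
          rw [show (4:ℝ) = 2 ^ 2 by norm_num, Real.log_pow]; push_cast; ring
      _ ≤ 1.4 := by nlinarith [Real.log_two_lt_d9]
  by_cases hcase : 1 ≤ lam * s
  · -- large s : use the product term
    have h1t : 1 ≤ lam * t := hcase.trans (by nlinarith)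
    have hb1 := sinh_ge_exp_div_four _ hcase
    have hb2 := sinh_ge_exp_div_four _ h1t
    have hcosb : Real.cos θ ≤ 1 - 2 / Real.pi ^ 2 * θ ^ 2 :=
      Real.cos_le_one_sub_mul_cos_sq (by rw [abs_of_pos hθ]; exact hθpi)
    have hcosb' : θ ^ 2 / 5 ≤ 1 - Real.cos θ := by
      have hπ : Real.pi ^ 2 < 10 := by nlinarith [Real.pi_lt_d2, Real.pi_pos]
      have hπpos : (0:ℝ) < Real.pi ^ 2 := by positivity
      have h15 : (1:ℝ) / 5 ≤ 2 / Real.pi ^ 2 := by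
        rw [div_le_div_iff₀ (by norm_num) hπpos]; nlinarith
      nlinarith [mul_le_mul_of_nonneg_right h15 (sq_nonneg θ)]
    have hprod : Real.exp (lam * s) * Real.exp (lam * t) * θ ^ 2 / 80
        ≤ Real.cosh (lam * d) := by
      have h1c : (1:ℝ) ≤ Real.cosh (lam * t - lam * s) := Real.one_le_cosh _
      have e1 : 0 < Real.exp (lam * s) := Real.exp_pos _
      have e2 : 0 < Real.exp (lam * t) := Real.exp_pos _
      have : Real.exp (lam * s) / 4 * (Real.exp (lam * t) / 4) * (θ ^ 2 / 5)
          ≤ Real.sinh (lam * s) * Real.sinh (lam * t) * (1 - Real.cos θ) := by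
        apply mul_le_mul (mul_le_mul hb1 hb2 (by positivity) hsinh_s) hcosb'
          (by positivity) (by positivity)
      rw [hid]
      have hr : Real.exp (lam * s) * Real.exp (lam * t) * θ ^ 2 / 80
          = Real.exp (lam * s) / 4 * (Real.exp (lam * t) / 4) * (θ ^ 2 / 5) := by ring
      linarith
    have hexp : Real.exp (lam * s) * Real.exp (lam * t) * θ ^ 2 / 80
        ≤ Real.exp (lam * d) := by
      refine hprod.trans ?_
      rw [Real.cosh_eq]
      have : Real.exp (-(lam * d)) ≤ Real.exp (lam * d) :=
        Real.exp_le_exp.mpr (by nlinarith)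
      linarith
    have hlog := Real.log_le_log (by positivity) hexp
    rw [Real.log_exp] at hlog
    rw [Real.log_div (by positivity) (by norm_num), Real.log_mul (by positivity)
      (by positivity), Real.log_mul (Real.exp_ne_zero _) (Real.exp_ne_zero _),
      Real.log_exp, Real.log_exp, Real.log_pow] at hlog
    have hlog80 : Real.log 80 ≤ 5 := by
      rw [Real.log_le_iff_le_exp (by norm_num)]
      have : Real.exp 5 = Real.exp 1 ^ (5:ℕ) := by
        rw [← Real.exp_nat_mul]; norm_num
      rw [this]
      have h27 : (2.7:ℝ) ≤ Real.exp 1 :=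
        le_trans (by norm_num) Real.exp_one_gt_d9.le
      have h5 : (2.7:ℝ) ^ (5:ℕ) ≤ Real.exp 1 ^ (5:ℕ) :=
        pow_le_pow_left₀ (by norm_num) h27 5
      norm_num at h5 ⊢
      linarith
    push_cast at hlog
    have hr : lam * (s + t) = lam * s + lam * t := by ring
    linarith
  · -- small s : use d ≥ t - s
    push_neg at hcase
    have h1 : lam * s ≤ lam * t := mul_le_mul_of_nonneg_left hst hlam.le
    have hmono : |lam * t - lam * s| ≤ |lam * d| := by
      rw [← Real.cosh_le_cosh, hid]
      nlinarith [mul_nonneg (mul_nonneg hsinh_s hsinh_t) (sub_nonneg.mpr hcos1)]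
    rw [abs_of_nonneg (by linarith), abs_of_nonneg (mul_nonneg hlam.le hd)] at hmono
    have hr : lam * (s + t) = lam * s + lam * t := by ring
    linarith
end

section
/- Under the hyperbolic law of cosines with λ > 0: for s, t with 2R < s ≤ t and θ ∈ (0, π], if e^{λ s}·θ ≥ 1 then the number d ≥ 0 determined by cosh(λ d) = cosh(λ s) cosh(λ t) − sinh(λ s) sinh(λ t) cos θ satisfies d ≤ s + t + (2/λ)·log θ + c₁ for a constant c₁ > 0 depending only on λ. -/
/-!
Write the law of cosines as
`cosh (λd) = cosh (λ(t - s)) + sinh (λs) sinh (λt) (1 - cos θ)`.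
With `1 - cos θ ≤ θ² / 2` and `sinh ≤ exp / 2` the second term is at most `e^{λ(s+t)} θ² / 8`,
and since `e^{-λs} ≤ θ` the first is at most `e^{λ(t-s)} ≤ e^{λ(s+t)} θ²`.
Hence `e^{λd} ≤ 2 cosh (λd) ≤ (9/4) e^{λ(s+t)} θ² ≤ e · e^{λ(s+t)} θ²`; taking logarithms gives
the bound with `c₁ = 1/λ`.
-/

open Real

namespace Real

lemma cosh_mul_cosh_sub_sinh_mul_sinh_mul_cos (a b θ : ℝ) :
    cosh a * cosh b - sinh a * sinh b * cos θ
      = cosh (b - a) + sinh a * sinh b * (1 - cos θ) := by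
  rw [cosh_sub]; ring

lemma cosh_le_exp_of_nonneg {y : ℝ} (hy : 0 ≤ y) : cosh y ≤ exp y := by
  rw [← cosh_add_sinh]; linarith [sinh_nonneg_iff.mpr hy]

lemma exp_le_two_mul_cosh (y : ℝ) : exp y ≤ 2 * cosh y := by
  rw [← cosh_add_sinh]; linarith [sinh_lt_cosh y]

lemma sinh_le_exp_div_two (y : ℝ) : sinh y ≤ exp y / 2 := by
  rw [sinh_eq]; linarith [exp_pos (-y)]

lemma one_sub_cos_le_sq_div_two (θ : ℝ) : 1 - cos θ ≤ θ ^ 2 / 2 := by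
  linarith [one_sub_sq_div_two_le_cos (x := θ)]

end Real

section HyperbolicLawOfCosines

variable {a b θ x : ℝ}

lemma cosh_sub_le_exp_add_mul_sq (hab : a ≤ b) (hθ : 1 ≤ exp a * θ) :
    cosh (b - a) ≤ exp (a + b) * θ ^ 2 := by
  have hexp : exp (-a) ≤ θ := by
    rwa [exp_neg, inv_le_iff_one_le_mul₀ (exp_pos a), mul_comm]
  calc cosh (b - a) ≤ exp (b - a) := cosh_le_exp_of_nonneg (by linarith)
    _ = exp (a + b) * exp (-a) ^ 2 := by rw [← exp_nat_mul, ← exp_add]; ring_nf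
    _ ≤ exp (a + b) * θ ^ 2 := by gcongr

lemma sinh_mul_sinh_mul_one_sub_cos_le (ha : 0 ≤ a) (hab : a ≤ b) :
    sinh a * sinh b * (1 - cos θ) ≤ exp (a + b) * θ ^ 2 / 8 := by
  have hsa : 0 ≤ sinh a := sinh_nonneg_iff.mpr ha
  have hsb : 0 ≤ sinh b := sinh_nonneg_iff.mpr (ha.trans hab)
  calc sinh a * sinh b * (1 - cos θ)
      ≤ (exp a / 2) * (exp b / 2) * (θ ^ 2 / 2) := by
        gcongr
        · linarith [cos_le_one θ]
        · exact sinh_le_exp_div_two a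
        · exact sinh_le_exp_div_two b
        · exact one_sub_cos_le_sq_div_two θ
    _ = exp (a + b) * θ ^ 2 / 8 := by rw [exp_add]; ring

lemma exp_le_of_hyperbolic_law_of_cosines (ha : 0 ≤ a) (hab : a ≤ b) (hθ : 1 ≤ exp a * θ)
    (hlaw : cosh x = cosh a * cosh b - sinh a * sinh b * cos θ) :
    exp x ≤ 9 / 4 * exp (a + b) * θ ^ 2 := by
  rw [cosh_mul_cosh_sub_sinh_mul_sinh_mul_cos] at hlaw
  linarith [exp_le_two_mul_cosh x, cosh_sub_le_exp_add_mul_sq hab hθ,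
    sinh_mul_sinh_mul_one_sub_cos_le (θ := θ) ha hab]

lemma le_add_log_of_hyperbolic_law_of_cosines (ha : 0 ≤ a) (hab : a ≤ b) (hθ : 1 ≤ exp a * θ)
    (hlaw : cosh x = cosh a * cosh b - sinh a * sinh b * cos θ) :
    x ≤ a + b + 2 * log θ + 1 := by
  have hθ0 : 0 < θ := pos_of_mul_pos_right (one_pos.trans_le hθ) (exp_pos a).le
  have hexp : exp (a + b + 2 * log θ + 1) = exp 1 * exp (a + b) * θ ^ 2 := by
    simp only [exp_add, two_mul, exp_log hθ0]; ring
  rw [← exp_le_exp, hexp]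
  calc exp x ≤ 9 / 4 * exp (a + b) * θ ^ 2 := exp_le_of_hyperbolic_law_of_cosines ha hab hθ hlaw
    _ ≤ exp 1 * exp (a + b) * θ ^ 2 := by gcongr; linarith [exp_one_gt_d9]

end HyperbolicLawOfCosines

theorem stmt18 (lam : ℝ) (hlam : 0 < lam) :
    ∃ c₁ > (0 : ℝ), ∀ R s t θ d : ℝ, 0 < R → 2 * R < s → s ≤ t →
      0 < θ → θ ≤ Real.pi → 0 ≤ d →
      1 ≤ Real.exp (lam * s) * θ →
      Real.cosh (lam * d) =
        Real.cosh (lam * s) * Real.cosh (lam * t)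
          - Real.sinh (lam * s) * Real.sinh (lam * t) * Real.cos θ →
      d ≤ s + t + (2 / lam) * Real.log θ + c₁ := by
  refine ⟨1 / lam, by positivity, fun R s t θ d hR hs hst _ _ _ hθ hlaw => ?_⟩
  have hbound := le_add_log_of_hyperbolic_law_of_cosines (by nlinarith)
    (mul_le_mul_of_nonneg_left hst hlam.le) hθ hlaw
  have hscaled : lam * d ≤ lam * (s + t + (2 / lam) * log θ + 1 / lam) := by
    field_simp at hbound ⊢; linarith
  exact le_of_mul_le_mul_left hscaled hlam
end
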